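/- In the rectangle R = [0,L]×[0,ℓ] with coordinates (s,t), let ψ(s,t) = f₀(t) exp(−iα₀ s − (i/2) s t) where (α₀, f₀) minimizes the finite-interval 1D functional E¹ᴰ_{α,ℓ}. Let F(s,t) = (1/2)(−t, s). Then the Ginzburg–Landau energy G[ψ; R] = ∫_R {|(∇ + iF)ψ|² − (1/(2b))(2|ψ|² − |ψ|⁴)} ds dt equals L·E¹ᴰ₀(ℓ), where E¹ᴰ₀(ℓ) = E¹ᴰ_{α₀,ℓ}[f₀]. -/

import Mathlib

open MeasureTheory

/-- Partial derivative in the first (tangential) variable. -/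
noncomputable def pdS (ψ : ℝ × ℝ → ℂ) (p : ℝ × ℝ) : ℂ :=
  deriv (fun x => ψ (x, p.2)) p.1

/-- Partial derivative in the second (normal) variable. -/
noncomputable def pdT (ψ : ℝ × ℝ → ℂ) (p : ℝ × ℝ) : ℂ :=
  deriv (fun y => ψ (p.1, y)) p.2

/-- The Ginzburg–Landau energy on the rectangle `[0,L] × [0,ℓ]` with magnetic
potential `F(s,t) = (1/2)(-t, s)`. -/
noncomputable def GLrect (b L ℓ : ℝ) (ψ : ℝ × ℝ → ℂ) : ℝ :=
  ∫ s in (0:ℝ)..L, ∫ t in (0:ℝ)..ℓ,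
    (‖pdS ψ (s, t) + Complex.I * (-(t / 2) : ℝ) * ψ (s, t)‖ ^ 2
      + ‖pdT ψ (s, t) + Complex.I * ((s / 2 : ℝ) : ℂ) * ψ (s, t)‖ ^ 2
      - (1 / (2 * b)) * (2 * ‖ψ (s, t)‖ ^ 2 - ‖ψ (s, t)‖ ^ 4))

/-- The finite-interval 1D functional. -/
noncomputable def E1Dl (b ℓ α : ℝ) (f : ℝ → ℝ) : ℝ :=
  ∫ t in (0:ℝ)..ℓ,
    (deriv f t ^ 2 + (t + α) ^ 2 * f t ^ 2 - (1 / (2 * b)) * (2 * f t ^ 2 - f t ^ 4))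

/-- `H¹([0, ℓ])`. -/
def H1Interval (ℓ : ℝ) (f : ℝ → ℝ) : Prop :=
  MemLp f 2 (volume.restrict (Set.Ioc 0 ℓ)) ∧
  MemLp (deriv f) 2 (volume.restrict (Set.Ioc 0 ℓ))
/-! The ansatz is `f₀(t)` times the unimodular gauge factor `e^{iΦ}`, `Φ(s,t) = -α₀ s - st/2`, and
`F + ∇Φ = -(t + α₀) ê_s`. Hence the covariant derivatives of `ψ` are `-i(t + α₀) ψ` and
`f₀'(t) e^{iΦ}`, the GL density at `(s,t)` is the 1D density of `f₀` at `t`, and integrating the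
`s`-independent density over `[0,L]` gives the factor `L`. -/

open Complex

lemma hasDerivAt_cexp_neg_I_mul_ofReal {θ : ℝ → ℝ} {θ' x : ℝ} (h : HasDerivAt θ θ' x) :
    HasDerivAt (fun y => exp (-I * θ y)) (-I * θ' * exp (-I * θ x)) x := by
  convert (h.ofReal_comp.const_mul (-I)).cexp using 1
  ring

/-- The gauge factor `e^{iΦ}` with `Φ(s,t) = -α s - st/2`. -/
noncomputable def gaugeFactor (α : ℝ) (p : ℝ × ℝ) : ℂ :=
  exp (-I * ((α * p.1 + p.1 * p.2 / 2 : ℝ) : ℂ))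

noncomputable def productAnsatz (f : ℝ → ℝ) (α : ℝ) (p : ℝ × ℝ) : ℂ :=
  f p.2 * gaugeFactor α p

section productAnsatz

variable (f : ℝ → ℝ) (α s t : ℝ)

lemma norm_gaugeFactor : ‖gaugeFactor α (s, t)‖ = 1 := by
  simp [gaugeFactor, norm_exp]

lemma norm_productAnsatz : ‖productAnsatz f α (s, t)‖ = |f t| := by
  rw [productAnsatz, norm_mul, norm_gaugeFactor, norm_real, Real.norm_eq_abs, mul_one]

lemma pdS_productAnsatz :
    pdS (productAnsatz f α) (s, t) = -I * (α + t / 2 : ℝ) * productAnsatz f α (s, t) := by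
  have hθ : HasDerivAt (fun x => α * x + x * t / 2) (α + t / 2) s := by
    rw [show (fun x => α * x + x * t / 2) = fun x => x * (α + t / 2) by ext x; ring]
    exact hasDerivAt_mul_const _
  simp only [pdS, productAnsatz, gaugeFactor]
  rw [((hasDerivAt_cexp_neg_I_mul_ofReal hθ).const_mul (f t : ℂ)).deriv]
  ring

lemma pdT_productAnsatz (hf : DifferentiableAt ℝ f t) :
    pdT (productAnsatz f α) (s, t)
      = deriv f t * gaugeFactor α (s, t) - I * (s / 2 : ℝ) * productAnsatz f α (s, t) := by
  have hθ : HasDerivAt (fun y => α * s + s * y / 2) (s / 2) t := by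
    rw [show (fun y => α * s + s * y / 2) = fun y => α * s + y * (s / 2) by ext y; ring]
    exact (hasDerivAt_mul_const _).const_add _
  simp only [pdT, productAnsatz, gaugeFactor]
  rw [(hf.hasDerivAt.ofReal_comp.fun_mul (hasDerivAt_cexp_neg_I_mul_ofReal hθ)).deriv]
  ring

/-- The gauge identity `F + ∇Φ = -(t + α) ê_s`. -/
lemma covS_productAnsatz :
    pdS (productAnsatz f α) (s, t) + I * (-(t / 2) : ℝ) * productAnsatz f α (s, t)
      = -I * (t + α : ℝ) * productAnsatz f α (s, t) := by
  rw [pdS_productAnsatz]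
  push_cast
  ring

lemma covT_productAnsatz (hf : DifferentiableAt ℝ f t) :
    pdT (productAnsatz f α) (s, t) + I * ((s / 2 : ℝ) : ℂ) * productAnsatz f α (s, t)
      = deriv f t * gaugeFactor α (s, t) := by
  rw [pdT_productAnsatz f α s t hf]
  ring

lemma glDensity_productAnsatz (b : ℝ) (hf : DifferentiableAt ℝ f t) :
    ‖pdS (productAnsatz f α) (s, t) + I * (-(t / 2) : ℝ) * productAnsatz f α (s, t)‖ ^ 2
      + ‖pdT (productAnsatz f α) (s, t) + I * ((s / 2 : ℝ) : ℂ) * productAnsatz f α (s, t)‖ ^ 2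
      - (1 / (2 * b)) * (2 * ‖productAnsatz f α (s, t)‖ ^ 2 - ‖productAnsatz f α (s, t)‖ ^ 4)
      = deriv f t ^ 2 + (t + α) ^ 2 * f t ^ 2 - (1 / (2 * b)) * (2 * f t ^ 2 - f t ^ 4) := by
  rw [covS_productAnsatz, covT_productAnsatz f α s t hf]
  simp only [norm_mul, norm_neg, norm_I, norm_real, Real.norm_eq_abs, norm_gaugeFactor,
    norm_productAnsatz, one_mul, mul_one, mul_pow, sq_abs, Even.pow_abs ⟨2, rfl⟩]
  ring

end productAnsatz

theorem GL_energy_of_ansatz (b L ℓ α₀ : ℝ)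
    (f₀ : ℝ → ℝ) (hreg : ContDiff ℝ 1 f₀) :
    GLrect b L ℓ (fun p =>
        (f₀ p.2 : ℂ) * Complex.exp (-Complex.I * ((α₀ * p.1 + p.1 * p.2 / 2 : ℝ) : ℂ)))
      = L * E1Dl b ℓ α₀ f₀ := by
  have hdensity := fun s t =>
    glDensity_productAnsatz f₀ α₀ s t b (hreg.differentiable one_ne_zero t)
  change GLrect b L ℓ (productAnsatz f₀ α₀) = _
  simp only [GLrect, hdensity, intervalIntegral.integral_const, sub_zero, smul_eq_mul, E1Dl]
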